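/- arXiv:2512.09509 — 10 statements merged into one kernel-verified Lean document; each statement's English description precedes it below -/
import Mathlib

section
/- Let $T$ be a rooted tree in which every non-leaf vertex has at least 2 children and every root-to-leaf path has at least 2 vertices. Define a hypergraph $H_T$ on the vertex set of $T$ whose edges are (1) for each non-leaf vertex $v$, the set of children of $v$, and (2) for each leaf $v$, the set of vertices on the path from the root to $v$. Then $H_T$ is not 2-colorable: for every 2-coloring of the vertices of $T$, some edge of $H_T$ is monochromatic. -/
/-- For a rooted tree (modeled via a parent function under which every
vertex eventually reaches the root) in which every non-leaf has at least 2 children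
and every leaf is distinct from the root (root-to-leaf paths have at least 2 vertices),
the tree hypergraph (children sets of non-leaves, and root-to-leaf ancestor paths of
leaves) is not 2-colorable. -/
theorem stmt0 {V : Type*} [Fintype V] (root : V) (parent : V → V)
    (hroot : parent root = root)
    (hreach : ∀ v : V, ∃ n : ℕ, parent^[n] v = root)
    (isLeaf : V → Prop)
    (hleaf : ∀ v, isLeaf v ↔ ∀ u : V, ¬(u ≠ root ∧ parent u = v))
    (hbranch : ∀ v, ¬ isLeaf v → 2 ≤ {u : V | u ≠ root ∧ parent u = v}.ncard)
    (hdepth : ∀ v, isLeaf v → v ≠ root) :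
    ∀ c : V → Bool,
      (∃ v, ¬ isLeaf v ∧ ∀ u ∈ {u : V | u ≠ root ∧ parent u = v},
          ∀ u' ∈ {u : V | u ≠ root ∧ parent u = v}, c u = c u') ∨
      (∃ v, isLeaf v ∧ ∀ u ∈ {u : V | ∃ n : ℕ, parent^[n] v = u},
          ∀ u' ∈ {u' : V | ∃ n : ℕ, parent^[n] v = u'}, c u = c u') := by
  intro c
  by_contra hcon
  push_neg at hcon
  obtain ⟨h1, h2⟩ := hcon
  classical
  set d : V → ℕ := fun v => Nat.find (hreach v) with hd
  have hdspec : ∀ v, parent^[d v] v = root := fun v => Nat.find_spec (hreach v)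
  have hdmin : ∀ v n, parent^[n] v = root → d v ≤ n := fun v n h => Nat.find_le h
  have hd0 : ∀ v, d v = 0 → v = root := by
    intro v h
    have hs := hdspec v
    rw [h] at hs
    simpa using hs
  have hdroot : d root = 0 := Nat.le_zero.mp (hdmin root 0 (by simp))
  have hchild : ∀ u v, u ≠ root → parent u = v → d v < d u := by
    intro u v hu hp
    have hne : d u ≠ 0 := fun h => hu (hd0 u h)
    have hs : parent^[d u - 1] v = root := by
      have hs2 := hdspec u
      rw [show d u = (d u - 1) + 1 by omega, Function.iterate_succ_apply, hp] at hs2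
      exact hs2
    have := hdmin v _ hs
    omega
  have hcard : ∀ v, d v < Fintype.card V := by
    intro v
    have hinj : Set.InjOn (fun n => parent^[n] v) ↑(Finset.range (d v + 1)) := by
      intro i hi j hj hij
      simp only [Finset.coe_range, Set.mem_Iio] at hi hj
      have hij' : parent^[i] v = parent^[j] v := hij
      clear hij
      by_contra hne
      wlog h : i < j generalizing i j
      · exact this hj hi hij'.symm (fun h' => hne h'.symm) (by omega)
      have hkey : parent^[(d v - j) + i] v = root := by
        have h3 : parent^[d v - j] (parent^[j] v) = root := by
          rw [← Function.iterate_add_apply, show d v - j + j = d v by omega]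
          exact hdspec v
        rw [← hij', ← Function.iterate_add_apply] at h3
        exact h3
      have := hdmin v _ hkey
      omega
    have := Finset.card_le_card_of_injOn (fun n => parent^[n] v)
      (fun a _ => Finset.mem_univ _) hinj
    simpa using this
  have main : ∀ k v, Fintype.card V ≤ d v + k → c v = c root →
      (∀ n, c (parent^[n] v) = c root) → False := by
    intro k
    induction k with
    | zero =>
      intro v hk _ _
      have := hcard v
      omega
    | succ k ih =>
      intro v hk hcv hanc
      by_cases hl : isLeaf v
      · obtain ⟨u, ⟨n, hn⟩, u', ⟨m, hm⟩, hne⟩ := h2 v hl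
        exact hne (by rw [← hn, ← hm, hanc n, hanc m])
      · obtain ⟨u, hu, u', hu', hne⟩ := h1 v hl
        have hw : ∃ w, w ∈ {u : V | u ≠ root ∧ parent u = v} ∧ c w = c root := by
          rcases eq_or_ne (c u) (c root) with h | h
          · exact ⟨u, hu, h⟩
          · refine ⟨u', hu', ?_⟩
            revert hne h
            cases c u <;> cases c u' <;> cases c root <;> simp
        obtain ⟨w, ⟨hwroot, hwp⟩, hwc⟩ := hw
        have hdw := hchild w v hwroot hwp
        refine ih w (by omega) hwc ?_
        intro n
        cases n with
        | zero => simpa using hwc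
        | succ n =>
          rw [Function.iterate_succ_apply, hwp]
          exact hanc n
  refine main (Fintype.card V) root (by omega) rfl ?_
  intro n
  rw [Function.iterate_fixed hroot n]
end

section
/- Let $k \ge 2$ and let $H_1, \dots, H_{k-1}$ be hypergraphs on a common vertex set $V$ such that each $H_i$ admits a polychromatic $k$-coloring (a $k$-coloring of $V$ in which every edge of $H_i$ contains all $k$ colors). Then the hypergraph $\bigcup_{i=1}^{k-1} H_i$ (the hypergraph on $V$ whose edge set is the union of the edge sets of the $H_i$) admits a proper $k$-coloring, i.e., a $k$-coloring in which no edge with at least two vertices is monochromatic. -/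
/-- If hypergraphs H₁,…,H_{k-1} on a common vertex set each admit a
polychromatic k-coloring, then their union admits a proper k-coloring. -/
theorem stmt1 {V : Type*} (k : ℕ) (hk : 2 ≤ k)
    (H : Fin (k - 1) → Set (Set V))
    (hpoly : ∀ i, ∃ c : V → Fin k, ∀ e ∈ H i, ∀ col : Fin k, ∃ v ∈ e, c v = col) :
    ∃ c : V → Fin k, ∀ i, ∀ e ∈ H i,
      (∃ u ∈ e, ∃ v ∈ e, u ≠ v) → ∃ u ∈ e, ∃ v ∈ e, c u ≠ c v := by
  choose C hC using hpoly
  have hex : ∀ v : V, ∃ t : Fin k, ∀ i, t ≠ C i v := by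
    intro v
    by_contra h
    push_neg at h
    have hsub : (Finset.univ : Finset (Fin k)) ⊆
        Finset.univ.image (fun i : Fin (k - 1) => C i v) := by
      intro t _
      obtain ⟨i, hi⟩ := h t
      exact Finset.mem_image.mpr ⟨i, Finset.mem_univ i, hi.symm⟩
    have hle := Finset.card_le_card hsub
    have hcard : (Finset.univ.image (fun i : Fin (k - 1) => C i v)).card ≤ k - 1 := by
      calc (Finset.univ.image (fun i : Fin (k - 1) => C i v)).card
          ≤ (Finset.univ : Finset (Fin (k - 1))).card := Finset.card_image_le
        _ = k - 1 := by simp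
    simp only [Finset.card_univ, Fintype.card_fin] at hle
    omega
  choose c hc using hex
  refine ⟨c, ?_⟩
  intro i e he hne
  by_contra h
  push_neg at h
  obtain ⟨u, hu, -⟩ := hne
  obtain ⟨w, hw, hwc⟩ := hC i e he (c u)
  exact hc w i (((h u hu w hw).symm).trans hwc.symm)
end

section
/- For every $k \ge 2$ there exist $k-1$ hypergraphs $H_1, \dots, H_{k-1}$ on a common vertex set, each admitting a polychromatic $k$-coloring, such that the union $\bigcup_{j=1}^{k-1} H_j$ has chromatic number exactly $k$ (in particular, it admits no proper $(k-1)$-coloring). Concretely, take $V = \{1,\dots,k\}^{k-1}$ and let a $k$-tuple $v^1,\dots,v^k \in V$ form an edge of $H_j$ if and only if the $j$-th coordinates $v^1_j, \dots, v^k_j$ are pairwise distinct (i.e., $\{v^1_j,\dots,v^k_j\} = \{1,\dots,k\}$). -/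
/-- Sharpness of the combination lemma: on V = {1,…,k}^{k-1}, the
hypergraphs H_j (edges = ranges of k-tuples whose j-th coordinates are pairwise
distinct) each admit a polychromatic k-coloring, their union admits a proper
k-coloring, but no proper (k-1)-coloring. -/
theorem stmt2 (k : ℕ) (hk : 2 ≤ k) :
    ∃ E : Fin (k - 1) → Set (Set (Fin (k - 1) → Fin k)),
      (∀ j, E j = {S | ∃ f : Fin k → (Fin (k - 1) → Fin k),
          S = Set.range f ∧ Function.Injective (fun a => f a j)}) ∧
      (∀ j, ∃ c : (Fin (k - 1) → Fin k) → Fin k,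
          ∀ e ∈ E j, ∀ col : Fin k, ∃ v ∈ e, c v = col) ∧
      (∃ c : (Fin (k - 1) → Fin k) → Fin k, ∀ j, ∀ e ∈ E j,
          (∃ u ∈ e, ∃ v ∈ e, u ≠ v) → ∃ u ∈ e, ∃ v ∈ e, c u ≠ c v) ∧
      (¬ ∃ c : (Fin (k - 1) → Fin k) → Fin (k - 1), ∀ j, ∀ e ∈ E j,
          (∃ u ∈ e, ∃ v ∈ e, u ≠ v) → ∃ u ∈ e, ∃ v ∈ e, c u ≠ c v) := by
  haveI : NeZero k := ⟨by omega⟩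
  refine ⟨fun j => {S | ∃ f : Fin k → (Fin (k - 1) → Fin k),
      S = Set.range f ∧ Function.Injective (fun a => f a j)},
      fun j => rfl, ?_, ?_, ?_⟩
  · -- polychromatic k-coloring of each H_j : color by the j-th coordinate
    intro j
    refine ⟨fun v => v j, ?_⟩
    rintro e ⟨f, rfl, hf⟩ col
    obtain ⟨a, ha⟩ := Finite.surjective_of_injective hf col
    exact ⟨f a, Set.mem_range_self a, ha⟩
  · -- proper k-coloring of the union : color v by a value missing from its range
    have hmiss : ∀ v : Fin (k - 1) → Fin k, ∃ i, i ∉ Set.range v := by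
      intro v
      by_contra h
      push_neg at h
      have hs : Function.Surjective v := fun i => h i
      have := Fintype.card_le_of_surjective v hs
      simp only [Fintype.card_fin] at this
      omega
    choose c hc using hmiss
    refine ⟨c, ?_⟩
    rintro j e ⟨f, rfl, hf⟩ -
    by_contra h
    push_neg at h
    obtain ⟨a, ha⟩ := Finite.surjective_of_injective hf (c (f 0))
    have hca : c (f a) = c (f 0) := h (f a) ⟨a, rfl⟩ (f 0) ⟨0, rfl⟩
    exact hc (f a) ⟨j, by simpa [hca] using ha⟩
  · -- no proper (k-1)-coloring
    rintro ⟨c, hc⟩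
    have h01 : (⟨0, by omega⟩ : Fin k) ≠ ⟨1, by omega⟩ := by
      simp [Fin.ext_iff]
    have key : ∀ i j : Fin (k - 1), ∃ m : Fin k, ∀ v, c v = i → v j ≠ m := by
      intro i j
      by_contra h
      push_neg at h
      choose g hg1 hg2 using h
      have hinj : Function.Injective (fun a => g a j) := by
        intro a b hab
        simp only at hab
        rw [hg2 a, hg2 b] at hab
        exact hab
      have hne : g ⟨0, by omega⟩ ≠ g ⟨1, by omega⟩ := by
        intro hgg
        apply h01
        rw [← hg2 ⟨0, by omega⟩, ← hg2 ⟨1, by omega⟩, hgg]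
      obtain ⟨u, ⟨a, rfl⟩, v, ⟨b, rfl⟩, huv⟩ :=
        hc j (Set.range g) ⟨g, rfl, hinj⟩
          ⟨g ⟨0, by omega⟩, ⟨_, rfl⟩, g ⟨1, by omega⟩, ⟨_, rfl⟩, hne⟩
      rw [hg1 a, hg1 b] at huv
      exact huv rfl
    choose m hm using key
    exact hm (c (fun j => m j j)) (c (fun j => m j j)) _ rfl rfl
end

section
/- For every positive integers $k$ and $t$, any finite set $P$ of points on the real line can be colored with $k$ colors so that every set that is a union of $t$ intervals and contains at least $t(k-1)+1$ points of $P$ contains points of all $k$ colors. Moreover, the bound $t(k-1)+1$ is best possible: there is a finite point set $P$ and for every $k$-coloring of $P$ a union of $t$ intervals containing exactly $t(k-1)$ points of $P$ that misses some color. -/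
lemma rank_strictMono (P : Finset ℝ) {p q : ℝ} (hp : p ∈ P) (hpq : p < q) :
    (P.filter (· < p)).card < (P.filter (· < q)).card := by
  classical
  apply Finset.card_lt_card
  constructor
  · intro x hx
    simp only [Finset.mem_filter] at hx ⊢
    exact ⟨hx.1, hx.2.trans hpq⟩
  · intro hsub
    have : p ∈ P.filter (· < p) := hsub (by simp [hp, hpq])
    simp at this

lemma rank_lt_card (P : Finset ℝ) {p : ℝ} (hp : p ∈ P) :
    (P.filter (· < p)).card < P.card := by
  classical
  apply Finset.card_lt_card
  exact ⟨Finset.filter_subset _ _, fun hsub => by have := hsub hp; simp at this⟩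

lemma rank_mono (P : Finset ℝ) {p q : ℝ} (hpq : p ≤ q) :
    (P.filter (· < p)).card ≤ (P.filter (· < q)).card := by
  classical
  apply Finset.card_le_card
  intro x hx
  simp only [Finset.mem_filter] at hx ⊢
  exact ⟨hx.1, lt_of_lt_of_le hx.2 hpq⟩

lemma exists_rank (P : Finset ℝ) (n : ℕ) (hn : n < P.card) :
    ∃ p ∈ P, (P.filter (· < p)).card = n := by
  classical
  have hlt : ∀ p : {x // x ∈ P}, (P.filter (· < p.1)).card < P.card :=
    fun p => rank_lt_card P p.2
  set f : {x // x ∈ P} → Fin P.card := fun p => ⟨_, hlt p⟩ with hf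
  have hinj : Function.Injective f := by
    intro p q hpq
    by_contra hne
    have hne' : p.1 ≠ q.1 := fun h => hne (Subtype.ext h)
    have hval := congrArg Fin.val hpq
    simp only [hf] at hval
    rcases lt_or_gt_of_ne hne' with h | h
    · exact absurd hval (Nat.ne_of_lt (rank_strictMono P p.2 h))
    · exact absurd hval.symm (Nat.ne_of_lt (rank_strictMono P q.2 h))
  have hbij : Function.Bijective f := by
    rw [Fintype.bijective_iff_injective_and_card]
    exact ⟨hinj, by simp⟩
  obtain ⟨p, hp⟩ := hbij.2 ⟨n, hn⟩
  exact ⟨p.1, p.2, congrArg Fin.val hp⟩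
lemma interval_colors (k : ℕ) (hk : 0 < k) (P : Finset ℝ) (a b : ℝ)
    (hS : k ≤ (P.filter (fun p => p ∈ Set.Icc a b)).card) (col : Fin k) :
    ∃ p ∈ P, p ∈ Set.Icc a b ∧ (P.filter (· < p)).card % k = col.val := by
  classical
  set S := P.filter (fun p => p ∈ Set.Icc a b) with hSdef
  have hne : S.Nonempty := Finset.card_pos.mp (by omega)
  set s := S.min' hne with hs
  set m := S.max' hne with hm
  have hsS : s ∈ S := S.min'_mem hne
  have hmS : m ∈ S := S.max'_mem hne
  have hsP : s ∈ P := (Finset.mem_filter.mp hsS).1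
  have hmP : m ∈ P := (Finset.mem_filter.mp hmS).1
  have hsab : s ∈ Set.Icc a b := (Finset.mem_filter.mp hsS).2
  have hmab : m ∈ Set.Icc a b := (Finset.mem_filter.mp hmS).2
  set r : ℝ → ℕ := fun x => (P.filter (· < x)).card with hr
  have hcardle : S.card ≤ (Finset.Icc (r s) (r m)).card := by
    apply Finset.card_le_card_of_injOn r
    · intro p hp
      have h1 : s ≤ p := S.min'_le p hp
      have h2 : p ≤ m := S.le_max' p hp
      exact Finset.mem_Icc.mpr ⟨rank_mono P h1, rank_mono P h2⟩
    · intro p hp q hq hpq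
      by_contra hne'
      rcases lt_or_gt_of_ne hne' with h | h
      · exact absurd hpq (Nat.ne_of_lt
          (rank_strictMono P (Finset.mem_filter.mp hp).1 h))
      · exact absurd hpq.symm (Nat.ne_of_lt
          (rank_strictMono P (Finset.mem_filter.mp hq).1 h))
  rw [Nat.card_Icc] at hcardle
  have hsm : r s ≤ r m := rank_mono P (S.min'_le m hmS)
  have hrmP : r m < P.card := rank_lt_card P hmP
  have hcol : col.val < k := col.2
  set n := r s + ((col.val + k - r s % k) % k) with hn
  have hmod1 : r s % k < k := Nat.mod_lt _ hk
  have hmod2 : (col.val + k - r s % k) % k < k := Nat.mod_lt _ hk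
  have hmod : n % k = col.val := by
    have hle : r s % k ≤ r s := Nat.mod_le _ _
    have hdm := Nat.div_add_mod (r s) k
    have heq : r s + (col.val + k - r s % k) = k * (r s / k) + (col.val + k) := by
      omega
    have h1 : (r s + (col.val + k - r s % k) % k) % k
        = (r s + (col.val + k - r s % k)) % k :=
      Nat.ModEq.add_left _ (Nat.mod_modEq _ _)
    rw [hn, h1, heq, Nat.mul_add_mod, Nat.add_mod_right, Nat.mod_eq_of_lt hcol]
  have hnlt : n < P.card := by omega
  obtain ⟨p, hpP, hrp⟩ := exists_rank P n hnlt
  have hrp' : r p = n := hrp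
  have hsp : s ≤ p := by
    by_contra h
    push_neg at h
    have h2 : r p < r s := rank_strictMono P hpP h
    omega
  have hpm : p ≤ m := by
    by_contra h
    push_neg at h
    have h2 : r m < r p := rank_strictMono P hmP h
    omega
  exact ⟨p, hpP, ⟨le_trans hsab.1 hsp, le_trans hpm hmab.2⟩, by rw [hrp]; exact hmod⟩

/-- For t-intervals, m_k = t(k-1)+1: any finite point set of ℝ can be
k-colored so that every union of t closed intervals containing at least t(k-1)+1
points contains all k colors, and the bound is best possible. -/
theorem stmt4 (k t : ℕ) (hk : 0 < k) (ht : 0 < t) :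
    (∀ P : Finset ℝ, ∃ c : ℝ → Fin k,
      ∀ u v : Fin t → ℝ,
        t * (k - 1) + 1 ≤ ((P : Set ℝ) ∩ ⋃ i, Set.Icc (u i) (v i)).ncard →
        ∀ col : Fin k, ∃ p ∈ P, p ∈ (⋃ i, Set.Icc (u i) (v i)) ∧ c p = col) ∧
    (∃ P : Finset ℝ, ∀ c : ℝ → Fin k, ∃ u v : Fin t → ℝ,
      ((P : Set ℝ) ∩ ⋃ i, Set.Icc (u i) (v i)).ncard = t * (k - 1) ∧
      ∃ col : Fin k, ∀ p ∈ P, p ∈ (⋃ i, Set.Icc (u i) (v i)) → c p ≠ col) := by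
  classical
  constructor
  · -- Part 1
    intro P
    refine ⟨fun x => ⟨(P.filter (· < x)).card % k, Nat.mod_lt _ hk⟩, ?_⟩
    intro u v hcard col
    have hset : (P : Set ℝ) ∩ (⋃ i, Set.Icc (u i) (v i))
        = ↑(P.filter (fun p => p ∈ ⋃ i, Set.Icc (u i) (v i))) := by
      ext x
      simp only [Set.mem_inter_iff, Finset.coe_filter, Set.mem_setOf_eq,
        Finset.mem_coe]
    rw [hset, Set.ncard_coe_finset] at hcard
    have hpig : ∃ i, k ≤ (P.filter (fun p => p ∈ Set.Icc (u i) (v i))).card := by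
      by_contra h
      push_neg at h
      have hsub : P.filter (fun p => p ∈ ⋃ i, Set.Icc (u i) (v i))
          ⊆ Finset.univ.biUnion (fun i => P.filter (fun p => p ∈ Set.Icc (u i) (v i))) := by
        intro x hx
        rw [Finset.mem_filter] at hx
        obtain ⟨i, hi⟩ := Set.mem_iUnion.mp hx.2
        exact Finset.mem_biUnion.mpr ⟨i, Finset.mem_univ _, Finset.mem_filter.mpr ⟨hx.1, hi⟩⟩
      have h1 := Finset.card_le_card hsub
      have h2 := Finset.card_biUnion_le
        (s := (Finset.univ : Finset (Fin t)))
        (t := fun i => P.filter (fun p => p ∈ Set.Icc (u i) (v i)))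
      have h3 : ∑ i : Fin t, (P.filter (fun p => p ∈ Set.Icc (u i) (v i))).card
          ≤ ∑ _i : Fin t, (k - 1) :=
        Finset.sum_le_sum (fun i _ => by have := h i; omega)
      have h4 : ∑ _i : Fin t, (k - 1) = t * (k - 1) := by
        simp [Finset.sum_const, Finset.card_univ, mul_comm]
      omega
    obtain ⟨i, hi⟩ := hpig
    obtain ⟨p, hpP, hpab, hpc⟩ := interval_colors k hk P (u i) (v i) hi col
    exact ⟨p, hpP, Set.mem_iUnion.mpr ⟨i, hpab⟩, Fin.ext hpc⟩
  · -- Part 2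
    set N := t * k - 1 with hN
    have htk0 : 0 < t * k := Nat.mul_pos ht hk
    have htt : t ≤ t * k := Nat.le_mul_of_pos_right t hk
    refine ⟨(Finset.range N).image (fun n : ℕ => (n : ℝ)), ?_⟩
    intro c
    -- find a rare color
    have hcolex : ∃ col : Fin k, ((Finset.range N).filter (fun n : ℕ => c (n : ℝ) = col)).card < t := by
      by_contra h
      push_neg at h
      have hsum : (Finset.range N).card
          = ∑ col : Fin k, ((Finset.range N).filter (fun n : ℕ => c (n : ℝ) = col)).card :=
        Finset.card_eq_sum_card_fiberwise (fun x _ => Finset.mem_univ (c x))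
      have h2 : ∑ _col : Fin k, t
          ≤ ∑ col : Fin k, ((Finset.range N).filter (fun n : ℕ => c (n : ℝ) = col)).card :=
        Finset.sum_le_sum (fun i _ => h i)
      have h3 : ∑ _col : Fin k, t = k * t := by
        simp [Finset.sum_const, Finset.card_univ]
      rw [Finset.card_range] at hsum
      have hmc : t * k = k * t := mul_comm t k
      omega
    obtain ⟨col, hcolcard⟩ := hcolex
    set B := (Finset.range N).filter (fun n : ℕ => c (n : ℝ) = col) with hB
    have hB1 : B.card ≤ t - 1 := by omega
    have hBsub : B ⊆ Finset.range N := Finset.filter_subset _ _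
    have hNge : t - 1 ≤ (Finset.range N).card := by
      rw [Finset.card_range]; omega
    obtain ⟨C, hBC, hCsub, hCcard⟩ := Finset.exists_subsuperset_card_eq hBsub hB1 hNge
    set G := Finset.range N \ C with hG
    have htk : t * k = t * (k - 1) + t := by
      have h1 : k - 1 + 1 = k := Nat.succ_pred_eq_of_pos hk
      calc t * k = t * ((k - 1) + 1) := by rw [h1]
        _ = t * (k - 1) + t := by ring
    have hGcard : G.card = t * (k - 1) := by
      rw [hG, Finset.card_sdiff_of_subset hCsub, Finset.card_range, hCcard]; omega
    set idx : ℕ → ℕ := fun n => (C.filter (· < n)).card with hidx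
    have hidxlt : ∀ n, idx n < t := by
      intro n
      have h1 : (C.filter (· < n)).card ≤ C.card :=
        Finset.card_le_card (Finset.filter_subset _ _)
      have h2 : idx n = (C.filter (· < n)).card := rfl
      omega
    set block : Fin t → Finset ℕ := fun i => G.filter (fun n => idx n = i.val) with hblock
    set u : Fin t → ℝ :=
      fun i => if h : (block i).Nonempty then ((block i).min' h : ℝ) else 1 with hu
    set v : Fin t → ℝ :=
      fun i => if h : (block i).Nonempty then ((block i).max' h : ℝ) else 0 with hv
    -- claim 1 : every element of G is covered
    have claim1 : ∀ n ∈ G, (n : ℝ) ∈ ⋃ i, Set.Icc (u i) (v i) := by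
      intro n hn
      have hbne : (block ⟨idx n, hidxlt n⟩).Nonempty :=
        ⟨n, Finset.mem_filter.mpr ⟨hn, rfl⟩⟩
      refine Set.mem_iUnion.mpr ⟨⟨idx n, hidxlt n⟩, ?_⟩
      have hnb : n ∈ block ⟨idx n, hidxlt n⟩ := Finset.mem_filter.mpr ⟨hn, rfl⟩
      constructor
      · rw [hu]
        simp only [dif_pos hbne]
        exact_mod_cast Finset.min'_le _ n hnb
      · rw [hv]
        simp only [dif_pos hbne]
        exact_mod_cast Finset.le_max' _ n hnb
    -- claim 2 : covered points of range N are in G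
    have claim2 : ∀ n : ℕ, n < N → ∀ i : Fin t,
        (n : ℝ) ∈ Set.Icc (u i) (v i) → n ∈ G := by
      intro n hnN i hmem
      by_cases hbne : (block i).Nonempty
      · have h1 : ((block i).min' hbne : ℝ) ≤ (n : ℝ) := by
          have := hmem.1; rw [hu] at this; simpa [dif_pos hbne] using this
        have h2 : (n : ℝ) ≤ ((block i).max' hbne : ℝ) := by
          have := hmem.2; rw [hv] at this; simpa [dif_pos hbne] using this
        set m1 := (block i).min' hbne with hm1
        set m2 := (block i).max' hbne with hm2
        have hm1n : m1 ≤ n := by exact_mod_cast h1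
        have hnm2 : n ≤ m2 := by exact_mod_cast h2
        have hm1b : m1 ∈ block i := Finset.min'_mem _ hbne
        have hm2b : m2 ∈ block i := Finset.max'_mem _ hbne
        have hm1G : m1 ∈ G := (Finset.mem_filter.mp hm1b).1
        have hm2G : m2 ∈ G := (Finset.mem_filter.mp hm2b).1
        have hm1i : (C.filter (· < m1)).card = i.val := (Finset.mem_filter.mp hm1b).2
        have hm2i : (C.filter (· < m2)).card = i.val := (Finset.mem_filter.mp hm2b).2
        have hm1C : m1 ∉ C := by
          have := hm1G; rw [hG, Finset.mem_sdiff] at this; exact this.2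
        have hm2C : m2 ∉ C := by
          have := hm2G; rw [hG, Finset.mem_sdiff] at this; exact this.2
        rw [hG, Finset.mem_sdiff]
        refine ⟨Finset.mem_range.mpr hnN, ?_⟩
        intro hnC
        have hn1 : n ≠ m1 := by rintro rfl; exact hm1C hnC
        have hn2 : n ≠ m2 := by rintro rfl; exact hm2C hnC
        have hlt1 : m1 < n := lt_of_le_of_ne hm1n (Ne.symm hn1)
        have hlt2 : n < m2 := lt_of_le_of_ne hnm2 hn2
        have hss : C.filter (· < m1) ⊂ C.filter (· < m2) := by
          constructor
          · intro q hq
            rw [Finset.mem_filter] at hq ⊢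
            exact ⟨hq.1, hq.2.trans (hlt1.trans hlt2)⟩
          · intro hsub
            have h3 := hsub (Finset.mem_filter.mpr ⟨hnC, hlt2⟩)
            rw [Finset.mem_filter] at h3
            omega
        have := Finset.card_lt_card hss
        omega
      · exfalso
        have h1 := hmem.1
        have h2 := hmem.2
        rw [hu] at h1; rw [hv] at h2
        simp only [dif_neg hbne] at h1 h2
        linarith
    refine ⟨u, v, ?_, ?_⟩
    · -- cardinality
      have hseteq : ((↑((Finset.range N).image (fun n : ℕ => (n : ℝ))) : Set ℝ)
          ∩ ⋃ i, Set.Icc (u i) (v i))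
          = ↑(G.image (fun n : ℕ => (n : ℝ))) := by
        ext x
        simp only [Set.mem_inter_iff, Finset.coe_image, Set.mem_image,
          Finset.mem_coe, Set.mem_iUnion, Finset.mem_range]
        constructor
        · rintro ⟨⟨n, hnN, rfl⟩, i, hxI⟩
          exact ⟨n, claim2 n hnN i hxI, rfl⟩
        · rintro ⟨n, hnG, rfl⟩
          have hnN : n ∈ Finset.range N := by
            have := hnG; rw [hG, Finset.mem_sdiff] at this; exact this.1
          exact ⟨⟨n, Finset.mem_range.mp hnN, rfl⟩,
            Set.mem_iUnion.mp (claim1 n hnG)⟩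
      rw [hseteq, Set.ncard_coe_finset,
        Finset.card_image_of_injective _ Nat.cast_injective, hGcard]
    · -- missing color
      refine ⟨col, ?_⟩
      intro p hpP hpU hcp
      rw [Finset.mem_image] at hpP
      obtain ⟨n, hnN, rfl⟩ := hpP
      obtain ⟨i, hi⟩ := Set.mem_iUnion.mp hpU
      have hnG : n ∈ G := claim2 n (Finset.mem_range.mp hnN) i hi
      have hnC : n ∉ C := by
        have := hnG; rw [hG, Finset.mem_sdiff] at this; exact this.2
      exact hnC (hBC (Finset.mem_filter.mpr ⟨hnN, hcp⟩))
end

section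
/- Define recursively hypergraphs $H(k,l)$ for positive integers $k,l$, with edge set partitioned into red edges (each of size $k$) and blue edges (each of size $l$): $H(1,l)$ has an $l$-element vertex set, its red edges are all singletons and its unique blue edge is the whole vertex set; $H(k,1)$ has a $k$-element vertex set, its unique red edge is the whole vertex set and its blue edges are all singletons; for $k,l > 1$, $H(k,l)$ is obtained from disjoint copies of $H(k-1,l)$ and $H(k,l-1)$ together with a new root vertex $p$, where the red edges are the red edges of $H(k-1,l)$ each extended by $p$, together with the red edges of $H(k,l-1)$, and the blue edges are the blue edges of $H(k-1,l)$, together with the blue edges of $H(k,l-1)$ each extended by $p$. Then for every 2-coloring of the vertices of $H(k,l)$ with colors red and blue, there is either a red edge all of whose vertices are red, or a blue edge all of whose vertices are blue. -/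
/-- Data of a two-colored hypergraph: vertex type, red edges, blue edges. -/
structure HData where
  V : Type
  R : Set (Set V)
  B : Set (Set V)

/-- The extension step: build H(k,l) from H(k,l-1) (`prev`) and H(k-1,l) (`left`):
a new root vertex is added to every red edge of H(k-1,l) and every blue edge of
H(k,l-1). -/
def rowStep (prev left : HData) : HData where
  V := left.V ⊕ prev.V ⊕ Unit
  R := {S | ∃ e ∈ left.R, S = (Sum.inl '' e) ∪ {Sum.inr (Sum.inr ())}} ∪
       {S | ∃ e ∈ prev.R, S = (Sum.inr ∘ Sum.inl) '' e}
  B := {S | ∃ e ∈ left.B, S = Sum.inl '' e} ∪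
       {S | ∃ e ∈ prev.B, S = ((Sum.inr ∘ Sum.inl) '' e) ∪ {Sum.inr (Sum.inr ())}}

/-- Row recursion: given the previous row `prevRow` (i.e. j ↦ H(k-1, j+1)),
`hrow prevRow i j` is H(i+2, j+1). -/
def hrow (prevRow : ℕ → HData) (i : ℕ) : ℕ → HData
  | 0 => ⟨Fin (i + 2), {Set.univ}, {S | ∃ v, S = {v}}⟩
  | j + 1 => rowStep (hrow prevRow i j) (prevRow (j + 1))

/-- `Hrec i j` is the hypergraph H(i+1, j+1) of the double recursive construction:
H(1,l) has l vertices, singleton red edges and the full blue edge; H(k,1) has k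
vertices, the full red edge and singleton blue edges; H(k,l) is built from
H(k-1,l) and H(k,l-1) by adding a root as in `rowStep`. -/
def Hrec : ℕ → ℕ → HData
  | 0, j => ⟨Fin (j + 1), {S | ∃ v, S = {v}}, {Set.univ}⟩
  | i + 1, j => hrow (Hrec i) i j

/-! Induction on `k + l`. Given a coloring of `H(k,l)`, look at the colour of the root. If it is red,
restrict the coloring to the copy of `H(k-1,l)`: an all-red red edge there stays all red
once the root is added, and its blue edges are blue edges of `H(k,l)` unchanged. If the root is blue,
argue symmetrically with the copy of `H(k,l-1)`. -/

namespace HData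

def ForcesMonochromaticEdge (h : HData) : Prop :=
  ∀ c : h.V → Bool,
    (∃ e ∈ h.R, ∀ v ∈ e, c v = true) ∨ (∃ e ∈ h.B, ∀ v ∈ e, c v = false)

variable {h : HData}

theorem forcesMonochromaticEdge_of_singleton_mem_R (hR : ∀ v, {v} ∈ h.R) (hB : Set.univ ∈ h.B) :
    h.ForcesMonochromaticEdge := by
  intro c
  by_cases hred : ∃ v, c v = true
  · obtain ⟨v, hv⟩ := hred
    exact .inl ⟨{v}, hR v, fun w hw => hw ▸ hv⟩
  · simp only [not_exists, Bool.not_eq_true] at hred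
    exact .inr ⟨Set.univ, hB, fun v _ => hred v⟩

theorem forcesMonochromaticEdge_of_singleton_mem_B (hB : ∀ v, {v} ∈ h.B) (hR : Set.univ ∈ h.R) :
    h.ForcesMonochromaticEdge := by
  intro c
  by_cases hblue : ∃ v, c v = false
  · obtain ⟨v, hv⟩ := hblue
    exact .inr ⟨{v}, hB v, fun w hw => hw ▸ hv⟩
  · simp only [not_exists, Bool.not_eq_false] at hblue
    exact .inl ⟨Set.univ, hR, fun v _ => hblue v⟩

end HData

open HData

theorem forcesMonochromaticEdge_rowStep {prev left : HData} (hprev : prev.ForcesMonochromaticEdge)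
    (hleft : left.ForcesMonochromaticEdge) : (rowStep prev left).ForcesMonochromaticEdge := by
  intro c
  set root : (rowStep prev left).V := Sum.inr (Sum.inr ())
  cases hroot : c root
  · rcases hprev (c ∘ Sum.inr ∘ Sum.inl) with ⟨e, he, hred⟩ | ⟨e, he, hblue⟩
    · refine .inl ⟨_, .inr ⟨e, he, rfl⟩, ?_⟩
      rintro _ ⟨v, hv, rfl⟩
      exact hred v hv
    · refine .inr ⟨_, .inr ⟨e, he, rfl⟩, ?_⟩
      rintro _ (⟨v, hv, rfl⟩ | rfl)
      exacts [hblue v hv, hroot]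
  · rcases hleft (c ∘ Sum.inl) with ⟨e, he, hred⟩ | ⟨e, he, hblue⟩
    · refine .inl ⟨_, .inl ⟨e, he, rfl⟩, ?_⟩
      rintro _ (⟨v, hv, rfl⟩ | rfl)
      exacts [hred v hv, hroot]
    · refine .inr ⟨_, .inl ⟨e, he, rfl⟩, ?_⟩
      rintro _ ⟨v, hv, rfl⟩
      exact hblue v hv

theorem forcesMonochromaticEdge_Hrec (i j : ℕ) : (Hrec i j).ForcesMonochromaticEdge := by
  induction i generalizing j with
  | zero => exact forcesMonochromaticEdge_of_singleton_mem_R (fun v => ⟨v, rfl⟩) rfl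
  | succ i ih =>
    induction j with
    | zero => exact forcesMonochromaticEdge_of_singleton_mem_B (fun v => ⟨v, rfl⟩) rfl
    | succ j ihj => exact forcesMonochromaticEdge_rowStep ihj (ih (j + 1))

theorem stmt5_general (k l : ℕ)
    (c : (Hrec (k - 1) (l - 1)).V → Bool) :
    (∃ e ∈ (Hrec (k - 1) (l - 1)).R, ∀ v ∈ e, c v = true) ∨
    (∃ e ∈ (Hrec (k - 1) (l - 1)).B, ∀ v ∈ e, c v = false) :=
  forcesMonochromaticEdge_Hrec (k - 1) (l - 1) c

/-- in every red/blue 2-coloring (encoded by `c : V → Bool` with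
`true` = red) of the vertices of H(k,l) there is an all-red red edge or an
all-blue blue edge. -/
theorem stmt5 (k l : ℕ) (hk : 0 < k) (hl : 0 < l)
    (c : (Hrec (k - 1) (l - 1)).V → Bool) :
    (∃ e ∈ (Hrec (k - 1) (l - 1)).R, ∀ v ∈ e, c v = true) ∨
    (∃ e ∈ (Hrec (k - 1) (l - 1)).B, ∀ v ∈ e, c v = false) :=
  stmt5_general k l c
end

section
/- Let $H$ be a hypergraph and suppose that for every $m$-uniform subpattern (subhypergraph of a trace) of $H$ there exists a hitting set intersecting every edge in at least 1 and at most $c$ vertices, and that edges can be shrunk appropriately (formally: assume $H$ is $m$-uniform and the hereditary family generated by $H$ admits $c$-shallow hitting sets for all its uniform members). Then $H$ admits a polychromatic coloring with $\lceil m/c \rceil$ colors. -/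
lemma stmt8_aux {V : Type*} [DecidableEq V] (F : Set (Set (Finset V))) (c : ℕ) (hc : 0 < c)
    (hhit : ∀ H ∈ F, ∀ m' : ℕ, 0 < m' → (∀ e ∈ H, e.card = m') →
      ∃ T : Finset V, ∀ e ∈ H, 1 ≤ (e ∩ T).card ∧ (e ∩ T).card ≤ c)
    (hshrink : ∀ H ∈ F, ∀ m' : ℕ, c < m' → (∀ e ∈ H, e.card = m') →
      ∀ T : Finset V, (∀ e ∈ H, 1 ≤ (e ∩ T).card ∧ (e ∩ T).card ≤ c) →
      ∃ H' ∈ F, (∀ e' ∈ H', e'.card = m' - c ∧ Disjoint e' T) ∧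
        ∀ e ∈ H, ∃ e' ∈ H', e' ⊆ e \ T) :
    ∀ m : ℕ, 0 < m → ∀ H ∈ F, (∀ e ∈ H, e.card = m) →
      ∃ χ : V → Fin ((m - 1) / c + 1), ∀ e ∈ H, ∀ col, ∃ v ∈ e, χ v = col := by
  intro m
  induction m using Nat.strong_induction_on with
  | _ m ih =>
    intro hm H hH hunif
    by_cases hmc : m ≤ c
    · -- one color suffices
      have h0 : (m - 1) / c = 0 := Nat.div_eq_of_lt (by omega)
      refine ⟨fun _ => 0, fun e he col => ?_⟩
      have hne : e.Nonempty := Finset.card_pos.mp (by rw [hunif e he]; exact hm)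
      obtain ⟨v, hv⟩ := hne
      refine ⟨v, hv, ?_⟩
      rcases col with ⟨i, hlt⟩
      rw [h0] at hlt
      rw [Fin.ext_iff]
      simp
      omega
    · push_neg at hmc
      obtain ⟨T, hT⟩ := hhit H hH m hm hunif
      obtain ⟨H', hH', hH'unif, hcover⟩ := hshrink H hH m hmc hunif T hT
      have hmc1 : 0 < m - c := by omega
      obtain ⟨χ', hχ'⟩ := ih (m - c) (by omega) hmc1 H' hH'
        (fun e' he' => (hH'unif e' he').1)
      have hcast : (m - c - 1) / c + 1 = (m - 1) / c := by
        have h2 : m - c - 1 + c = m - 1 := by omega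
        rw [← h2]
        exact (Nat.add_div_right (m - c - 1) hc).symm
      refine ⟨fun v => if v ∈ T then Fin.last ((m - 1) / c)
        else (Fin.cast hcast (χ' v)).castSucc, fun e he col => ?_⟩
      rcases Fin.eq_castSucc_or_eq_last col with ⟨j, hj⟩ | hj
      · -- use the subedge in H'
        obtain ⟨e', he', hsub⟩ := hcover e he
        obtain ⟨v, hv, hvcol⟩ := hχ' e' he' (Fin.cast hcast.symm j)
        have hvT : v ∉ T := by
          have := hsub hv
          exact (Finset.mem_sdiff.mp this).2
        refine ⟨v, (Finset.mem_sdiff.mp (hsub hv)).1, ?_⟩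
        simp only [hvT, if_false, hj, hvcol]
        rfl
      · -- use the hitting set
        have h1 := (hT e he).1
        obtain ⟨v, hv⟩ := Finset.card_pos.mp (by omega : 0 < (e ∩ T).card)
        rw [Finset.mem_inter] at hv
        exact ⟨v, hv.1, by simp [hv.2, hj]⟩

/-- if a family of hypergraphs admits c-shallow hitting sets for all its
uniform members, and edges can be shrunk after removing a shallow hitting set
(staying in the family with uniformity dropping by c), then every m-uniform member
admits a polychromatic coloring with ⌈m/c⌉ colors. -/
theorem stmt8 {V : Type*} [DecidableEq V] (F : Set (Set (Finset V))) (c m : ℕ) (hc : 0 < c) (hm : 0 < m)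
    (hhit : ∀ H ∈ F, ∀ m' : ℕ, 0 < m' → (∀ e ∈ H, e.card = m') →
      ∃ T : Finset V, ∀ e ∈ H, 1 ≤ (e ∩ T).card ∧ (e ∩ T).card ≤ c)
    (hshrink : ∀ H ∈ F, ∀ m' : ℕ, c < m' → (∀ e ∈ H, e.card = m') →
      ∀ T : Finset V, (∀ e ∈ H, 1 ≤ (e ∩ T).card ∧ (e ∩ T).card ≤ c) →
      ∃ H' ∈ F, (∀ e' ∈ H', e'.card = m' - c ∧ Disjoint e' T) ∧
        ∀ e ∈ H, ∃ e' ∈ H', e' ⊆ e \ T)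
    (H : Set (Finset V)) (hH : H ∈ F) (hunif : ∀ e ∈ H, e.card = m) :
    ∃ χ : V → Fin ((m + c - 1) / c), ∀ e ∈ H, ∀ col, ∃ v ∈ e, χ v = col := by
  obtain ⟨χ, hχ⟩ := stmt8_aux F c hc hhit hshrink m hm H hH hunif
  have hk : (m + c - 1) / c = (m - 1) / c + 1 := by
    have h2 : m - 1 + c = m + c - 1 := by omega
    rw [← h2]
    exact Nat.add_div_right (m - 1) hc
  refine ⟨fun v => Fin.cast hk.symm (χ v), fun e he col => ?_⟩
  obtain ⟨v, hv, hvcol⟩ := hχ e he (Fin.cast hk col)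
  refine ⟨v, hv, ?_⟩
  show Fin.cast hk.symm (χ v) = col
  rw [hvcol]
  rfl
end

section
/- Any finite family of quadrants of the form $[x_0, \infty) \times [y_0, \infty)$ in the plane can be $k$-colored so that every point of the plane that is covered by at least $k$ of the quadrants is covered by quadrants of all $k$ colors. Equivalently, for positive quadrants $m_k^* = k$. -/
/-!
Think of quadrant `i` as the point `(x i, y i)`: it contains `(a, b)` iff that point lies
weakly south-west of `(a, b)`. We colour so that every such south-west range `R` sees at
least `min k #R` colours, by induction adding the quadrants in order of increasing `x`.
The newest quadrant `p` has the largest `x`, so the ranges containing it are `p` together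
with a `y`-prefix of the older quadrants. All `y`-prefixes with fewer than `k` elements lie
in one of them, which has fewer than `k` elements, so some colour is missing there; giving
it to `p` keeps every small range containing `p` injectively coloured.
-/

open Finset

namespace Quadrant

variable {ι α β : Type*} [LinearOrder α] [LinearOrder β]

def covering (x : ι → α) (y : ι → β) (s : Finset ι) (a : α) (b : β) : Finset ι :=
  {i ∈ s | x i ≤ a ∧ y i ≤ b}

theorem covering_subset (x : ι → α) (y : ι → β) (s : Finset ι) (a : α) (b : β) :
    covering x y s a b ⊆ s :=
  filter_subset _ _

/-- The union of all `y`-prefixes of `s` with fewer than `k` elements. -/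
def lowRank (y : ι → β) (s : Finset ι) (k : ℕ) : Finset ι :=
  {i ∈ s | #{j ∈ s | y j ≤ y i} < k}

theorem card_lowRank_lt (y : ι → β) (s : Finset ι) {k : ℕ} (hk : 0 < k) :
    #(lowRank y s k) < k := by
  rcases (lowRank y s k).eq_empty_or_nonempty with h | h
  · simpa [h] using hk
  obtain ⟨i, hi, hmax⟩ := exists_max_image _ y h
  calc #(lowRank y s k) ≤ #{j ∈ s | y j ≤ y i} :=
        card_le_card fun j hj => mem_filter.2 ⟨(mem_filter.1 hj).1, hmax j hj⟩
    _ < k := (mem_filter.1 hi).2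

theorem filter_le_subset_lowRank (y : ι → β) (s : Finset ι) {k : ℕ} {b : β}
    (h : #{j ∈ s | y j ≤ b} < k) : {j ∈ s | y j ≤ b} ⊆ lowRank y s k := by
  intro i hi
  obtain ⟨his, hib⟩ := mem_filter.1 hi
  refine mem_filter.2 ⟨his, lt_of_le_of_lt (card_le_card fun j hj => ?_) h⟩
  obtain ⟨hjs, hji⟩ := mem_filter.1 hj
  exact mem_filter.2 ⟨hjs, hji.trans hib⟩

theorem exists_color_notMem_image {k : ℕ} (c : ι → Fin k) (W : Finset ι) (hW : #W < k) :
    ∃ col : Fin k, col ∉ W.image c := by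
  obtain ⟨col, -, hcol⟩ := exists_mem_notMem_of_card_lt_card (s := W.image c) (t := univ)
    (by simpa using card_image_le.trans_lt hW)
  exact ⟨col, hcol⟩

theorem covering_eq_filter_of_forall_le (x : ι → α) (y : ι → β) {s : Finset ι} {a : α}
    (b : β) (h : ∀ i ∈ s, x i ≤ a) : covering x y s a b = {j ∈ s | y j ≤ b} := by
  ext i
  simp only [covering, mem_filter]
  exact ⟨fun hi => ⟨hi.1, hi.2.2⟩, fun hi => ⟨hi.1, h i hi.1, hi.2⟩⟩

variable [DecidableEq ι]

theorem covering_insert_of_mem (x : ι → α) (y : ι → β) (s : Finset ι) {p : ι} {a : α} {b : β}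
    (hp : x p ≤ a ∧ y p ≤ b) : covering x y (insert p s) a b = insert p (covering x y s a b) := by
  rw [covering, filter_insert, if_pos hp, covering]

theorem covering_insert_of_notMem (x : ι → α) (y : ι → β) (s : Finset ι) {p : ι} {a : α}
    {b : β} (hp : ¬(x p ≤ a ∧ y p ≤ b)) :
    covering x y (insert p s) a b = covering x y s a b := by
  rw [covering, filter_insert, if_neg hp, covering]

theorem exists_coloring_min_card_le_card_image (x : ι → α) (y : ι → β) {k : ℕ} (hk : 0 < k)
    (s : Finset ι) :
    ∃ c : ι → Fin k, ∀ a b,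
      min k #(covering x y s a b) ≤ #((covering x y s a b).image c) := by
  induction s using Finset.induction_on_max_value x with
  | empty => exact ⟨fun _ => ⟨0, hk⟩, fun a b => by simp [covering]⟩
  | insert p s hps hmax ih =>
    obtain ⟨c, hc⟩ := ih
    obtain ⟨col, hcol⟩ := exists_color_notMem_image c (lowRank y s k) (card_lowRank_lt y s hk)
    refine ⟨Function.update c p col, fun a b => ?_⟩
    have hcs : (covering x y s a b).image (Function.update c p col) =
        (covering x y s a b).image c := image_congr fun i hi =>
      Function.update_of_ne (by rintro rfl; exact hps (covering_subset x y s a b hi)) _ _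
    by_cases hp : x p ≤ a ∧ y p ≤ b
    · rw [covering_insert_of_mem x y s hp, image_insert, Function.update_self, hcs]
      have hcR := hc a b
      by_cases hsmall : #(covering x y s a b) < k
      · have hR := covering_eq_filter_of_forall_le x y b fun i hi => (hmax i hi).trans hp.1
        have hnew : col ∉ (covering x y s a b).image c := fun h => hcol <|
          image_subset_image (hR ▸ filter_le_subset_lowRank y s (hR ▸ hsmall)) h
        rw [card_insert_of_notMem hnew,
          card_insert_of_notMem fun h => hps (covering_subset x y s a b h)]
        omega
      · calc min k _ ≤ k := min_le_left _ _
          _ ≤ #((covering x y s a b).image c) := by omega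
          _ ≤ _ := card_le_card (subset_insert _ _)
    · rw [covering_insert_of_notMem x y s hp, hcs]
      exact hc a b

theorem exists_polychromatic_coloring (x : ι → α) (y : ι → β) {k : ℕ} (hk : 0 < k)
    (s : Finset ι) :
    ∃ c : ι → Fin k, ∀ a b, k ≤ #(covering x y s a b) →
      ∀ col, ∃ i ∈ covering x y s a b, c i = col := by
  obtain ⟨c, hc⟩ := exists_coloring_min_card_le_card_image x y hk s
  refine ⟨c, fun a b hR col => ?_⟩
  have hall : (covering x y s a b).image c = univ := by
    refine eq_univ_of_card _ (le_antisymm (card_le_univ _) ?_)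
    simpa [min_eq_left hR] using hc a b
  have hcol : col ∈ (covering x y s a b).image c := by rw [hall]; exact mem_univ col
  simpa using hcol

end Quadrant

/-- for positive quadrants m_k^* = k: any finite family of quadrants
[x_i,∞) × [y_i,∞) can be k-colored so that every point covered by at least k
quadrants is covered by quadrants of all k colors. -/
theorem stmt10 (n k : ℕ) (hk : 0 < k) (x y : Fin n → ℝ) :
    ∃ c : Fin n → Fin k, ∀ p : ℝ × ℝ,
      k ≤ {i : Fin n | x i ≤ p.1 ∧ y i ≤ p.2}.ncard →
      ∀ col : Fin k, ∃ i, c i = col ∧ x i ≤ p.1 ∧ y i ≤ p.2 := by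
  obtain ⟨c, hc⟩ := Quadrant.exists_polychromatic_coloring x y hk univ
  refine ⟨c, fun p hp col => ?_⟩
  have hcard : {i : Fin n | x i ≤ p.1 ∧ y i ≤ p.2}.ncard =
      #(Quadrant.covering x y univ p.1 p.2) := by
    rw [← Set.ncard_coe_finset]
    simp [Quadrant.covering]
  obtain ⟨i, hi, hci⟩ := hc p.1 p.2 (hcard ▸ hp) col
  exact ⟨i, hci, by simpa [Quadrant.covering] using hi⟩
end

section
/- Any finite set $P$ of points in the plane can be $k$-colored so that every positive quadrant $[x_0,\infty) \times [y_0,\infty)$ containing at least $k$ points of $P$ contains points of all $k$ colors. -/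
/-- `Good k c S` : there is a "top-`min |S| k` by y" subset `T` of `S` that is rainbow. -/
def Good (k : ℕ) (c : ℝ × ℝ → Fin k) (S : Finset (ℝ × ℝ)) : Prop :=
  ∃ T ⊆ S, T.card = min S.card k ∧ Set.InjOn c ↑T ∧
    ∀ p ∈ S, p ∉ T → ∀ q ∈ T, p.2 ≤ q.2

lemma good_congr {k : ℕ} {c c' : ℝ × ℝ → Fin k} {S : Finset (ℝ × ℝ)}
    (h : Good k c S) (hcc : ∀ p ∈ S, c' p = c p) : Good k c' S := by
  obtain ⟨T, hTS, hcard, hinj, htop⟩ := h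
  refine ⟨T, hTS, hcard, ?_, htop⟩
  intro a ha b hb hab
  rw [Finset.mem_coe] at ha hb
  have := hinj (Finset.mem_coe.mpr ha) (Finset.mem_coe.mpr hb)
  apply this
  rw [← hcc a (hTS ha), ← hcc b (hTS hb)]
  exact hab

lemma step_lemma (k : ℕ) (hk : 0 < k) (c₀ : ℝ × ℝ → Fin k) (P₀ : Finset (ℝ × ℝ))
    (p' : ℝ × ℝ) (hp' : p' ∉ P₀) (h : Good k c₀ P₀) :
    ∃ col : Fin k, Good k (Function.update c₀ p' col) (insert p' P₀) := by
  obtain ⟨T₀, hT₀sub, hT₀card, hinj, htop⟩ := h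
  have hT₀p' : p' ∉ T₀ := fun hmem => hp' (hT₀sub hmem)
  by_cases hlt : P₀.card < k
  · -- T₀ = P₀, add p' to T with a fresh color
    have hmin : min P₀.card k = P₀.card := min_eq_left (le_of_lt hlt)
    have hT₀eq : T₀ = P₀ :=
      Finset.eq_of_subset_of_card_le hT₀sub (by rw [hT₀card, hmin])
    have : ∃ col : Fin k, col ∉ T₀.image c₀ := by
      by_contra hcon
      push_neg at hcon
      have huniv : (Finset.univ : Finset (Fin k)) ⊆ T₀.image c₀ := fun x _ => hcon x
      have := Finset.card_le_card huniv
      rw [Finset.card_univ, Fintype.card_fin] at this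
      have h2 := Finset.card_image_le (s := T₀) (f := c₀)
      omega
    obtain ⟨col, hcol⟩ := this
    refine ⟨col, insert p' T₀, Finset.insert_subset_insert _ hT₀sub, ?_, ?_, ?_⟩
    · rw [Finset.card_insert_of_notMem hT₀p', Finset.card_insert_of_notMem hp',
        hT₀card, hmin]
      omega
    · intro a ha b hb hab
      rw [Finset.coe_insert, Set.mem_insert_iff] at ha hb
      have hup : ∀ q ∈ T₀, Function.update c₀ p' col q = c₀ q := by
        intro q hq
        exact Function.update_of_ne (fun hq' => hT₀p' (by rw [← hq']; exact hq)) _ _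
      rcases ha with ha | ha <;> rcases hb with hb | hb
      · rw [ha, hb]
      · exfalso
        rw [ha, Function.update_self, hup b hb] at hab
        exact hcol (Finset.mem_image.mpr ⟨b, hb, hab.symm⟩)
      · exfalso
        rw [hb, Function.update_self, hup a ha] at hab
        exact hcol (Finset.mem_image.mpr ⟨a, ha, hab⟩)
      · have := hinj (Finset.mem_coe.mpr ha) (Finset.mem_coe.mpr hb)
        apply this
        rw [← hup a ha, ← hup b hb]; exact hab
    · intro p hp hpT
      exfalso
      rw [hT₀eq] at hpT
      exact hpT hp
  · push_neg at hlt
    have hT₀card' : T₀.card = k := by rw [hT₀card]; omega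
    have hT₀ne : T₀.Nonempty := Finset.card_pos.mp (by omega)
    obtain ⟨q0, hq0mem, hq0min⟩ := T₀.exists_min_image (fun q => q.2) hT₀ne
    by_cases hcase : ∀ q ∈ T₀, p'.2 ≤ q.2
    · -- p' goes below T₀; keep T₀
      refine ⟨⟨0, hk⟩, T₀, hT₀sub.trans (Finset.subset_insert _ _), ?_, ?_, ?_⟩
      · rw [Finset.card_insert_of_notMem hp', hT₀card']
        omega
      · intro a ha b hb hab
        have hup : ∀ q ∈ T₀, Function.update c₀ p' (⟨0, hk⟩ : Fin k) q = c₀ q := by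
          intro q hq
          exact Function.update_of_ne (fun hq' => hT₀p' (by rw [← hq']; exact hq)) _ _
        apply hinj ha hb
        rw [← hup a ha, ← hup b hb]; exact hab
      · intro p hp hpT q hq
        rcases Finset.mem_insert.mp hp with rfl | hp
        · exact hcase q hq
        · exact htop p hp hpT q hq
    · -- p' replaces q0 in T₀
      push_neg at hcase
      obtain ⟨q1, hq1mem, hq1⟩ := hcase
      have hq0lt : q0.2 < p'.2 := lt_of_le_of_lt (hq0min q1 hq1mem) hq1
      have hp'T : p' ∉ T₀.erase q0 := fun hmem => hT₀p' (Finset.mem_of_mem_erase hmem)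
      refine ⟨c₀ q0, insert p' (T₀.erase q0), ?_, ?_, ?_, ?_⟩
      · exact Finset.insert_subset_insert _ ((T₀.erase_subset q0).trans hT₀sub)
      · rw [Finset.card_insert_of_notMem hp'T, Finset.card_erase_of_mem hq0mem,
          Finset.card_insert_of_notMem hp', hT₀card']
        omega
      · intro a ha b hb hab
        rw [Finset.coe_insert, Set.mem_insert_iff] at ha hb
        have hup : ∀ q ∈ T₀.erase q0, Function.update c₀ p' (c₀ q0) q = c₀ q := by
          intro q hq
          exact Function.update_of_ne (fun hq' => hp'T (by rw [← hq']; exact hq)) _ _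
        have hne : ∀ q ∈ T₀.erase q0, c₀ q0 ≠ c₀ q := by
          intro q hq hcon
          exact Finset.ne_of_mem_erase hq
            (hinj (Finset.mem_coe.mpr hq0mem)
              (Finset.mem_coe.mpr (Finset.mem_of_mem_erase hq)) hcon).symm
        rcases ha with ha | ha <;> rcases hb with hb | hb
        · rw [ha, hb]
        · exfalso
          rw [ha, Function.update_self, hup b hb] at hab
          exact hne b hb hab
        · exfalso
          rw [hb, Function.update_self, hup a ha] at hab
          exact hne a ha hab.symm
        · apply hinj (Finset.mem_coe.mpr (Finset.mem_of_mem_erase ha))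
            (Finset.mem_coe.mpr (Finset.mem_of_mem_erase hb))
          rw [← hup a ha, ← hup b hb]; exact hab
      · intro p hp hpT q hq
        have hpne : p ≠ p' := fun h => hpT (h ▸ Finset.mem_insert_self _ _)
        have hpP₀ : p ∈ P₀ := (Finset.mem_insert.mp hp).resolve_left hpne
        have hqcases : q = p' ∨ q ∈ T₀.erase q0 := Finset.mem_insert.mp hq
        by_cases hpT₀ : p ∈ T₀
        · -- then p = q0
          have hpq0 : p = q0 := by
            by_contra hne
            exact hpT (Finset.mem_insert_of_mem (Finset.mem_erase.mpr ⟨hne, hpT₀⟩))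
          subst hpq0
          rcases hqcases with rfl | hq'
          · exact le_of_lt hq0lt
          · exact hq0min q (Finset.mem_of_mem_erase hq')
        · rcases hqcases with rfl | hq'
          · exact le_trans (htop p hpP₀ hpT₀ q0 hq0mem) (le_of_lt hq0lt)
          · exact htop p hpP₀ hpT₀ q (Finset.mem_of_mem_erase hq')

lemma aux_lemma (k : ℕ) (hk : 0 < k) (P : Finset (ℝ × ℝ)) :
    ∃ c : ℝ × ℝ → Fin k, ∀ x0 : ℝ, Good k c (P.filter (fun p => x0 ≤ p.1)) := by
  induction P using Finset.strongInduction with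
  | _ P ih =>
    rcases P.eq_empty_or_nonempty with rfl | hne
    · refine ⟨fun _ => ⟨0, hk⟩, fun x0 => ⟨∅, Finset.empty_subset _, ?_, ?_, ?_⟩⟩
      · simp
      · simp [Set.InjOn]
      · simp
    · obtain ⟨p', hp'mem, hp'min⟩ := P.exists_min_image (fun p => p.1) hne
      have hsub : P.erase p' ⊂ P := Finset.erase_ssubset hp'mem
      obtain ⟨c₀, hc₀⟩ := ih (P.erase p') hsub
      have hp'not : p' ∉ P.erase p' := Finset.notMem_erase _ _
      -- Good for full P.erase p'
      have hfull : Good k c₀ (P.erase p') := by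
        have := hc₀ p'.1
        have heq : (P.erase p').filter (fun p => p'.1 ≤ p.1) = P.erase p' := by
          apply Finset.filter_true_of_mem
          intro p hp
          exact hp'min p (Finset.mem_of_mem_erase hp)
        rwa [heq] at this
      obtain ⟨col, hcol⟩ := step_lemma k hk c₀ (P.erase p') p' hp'not hfull
      rw [Finset.insert_erase hp'mem] at hcol
      refine ⟨Function.update c₀ p' col, fun x0 => ?_⟩
      by_cases hx0 : x0 ≤ p'.1
      · have heq : P.filter (fun p => x0 ≤ p.1) = P := by
          apply Finset.filter_true_of_mem
          intro p hp
          exact le_trans hx0 (hp'min p hp)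
        rw [heq]
        exact hcol
      · have heq : P.filter (fun p => x0 ≤ p.1) =
            (P.erase p').filter (fun p => x0 ≤ p.1) := by
          ext p
          simp only [Finset.mem_filter, Finset.mem_erase]
          constructor
          · rintro ⟨hp, hx⟩
            refine ⟨⟨?_, hp⟩, hx⟩
            rintro rfl
            exact hx0 hx
          · rintro ⟨⟨_, hp⟩, hx⟩
            exact ⟨hp, hx⟩
        rw [heq]
        apply good_congr (hc₀ x0)
        intro p hp
        apply Function.update_of_ne
        rintro rfl
        exact hp'not (Finset.mem_of_mem_filter _ hp)

/-- any finite planar point set can be k-colored so that every positive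
quadrant containing at least k points contains all k colors. -/
theorem stmt11 (k : ℕ) (hk : 0 < k) (P : Finset (ℝ × ℝ)) :
    ∃ c : ℝ × ℝ → Fin k, ∀ x0 y0 : ℝ,
      k ≤ {p : ℝ × ℝ | p ∈ P ∧ x0 ≤ p.1 ∧ y0 ≤ p.2}.ncard →
      ∀ col : Fin k, ∃ p ∈ P, x0 ≤ p.1 ∧ y0 ≤ p.2 ∧ c p = col := by
  obtain ⟨c, hc⟩ := aux_lemma k hk P
  refine ⟨c, fun x0 y0 hcard col => ?_⟩
  set Q : Finset (ℝ × ℝ) := P.filter (fun p => x0 ≤ p.1 ∧ y0 ≤ p.2) with hQdef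
  have hsetQ : {p : ℝ × ℝ | p ∈ P ∧ x0 ≤ p.1 ∧ y0 ≤ p.2} = ↑Q := by
    ext p
    simp [hQdef, Finset.mem_filter]
  rw [hsetQ, Set.ncard_coe_finset] at hcard
  set S : Finset (ℝ × ℝ) := P.filter (fun p => x0 ≤ p.1) with hSdef
  have hQS : Q ⊆ S := by
    intro p hp
    simp only [hQdef, hSdef, Finset.mem_filter] at hp ⊢
    exact ⟨hp.1, hp.2.1⟩
  have hScard : k ≤ S.card := le_trans hcard (Finset.card_le_card hQS)
  obtain ⟨T, hTS, hTcard, hinj, htop⟩ := hc x0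
  rw [← hSdef] at hTS hTcard htop
  have hTcard' : T.card = k := by rw [hTcard]; omega
  -- T ⊆ Q
  have hTy : ∀ q ∈ T, y0 ≤ q.2 := by
    intro q hq
    by_contra hqy
    push_neg at hqy
    have hQT : Q ⊆ T.erase q := by
      intro p hp
      have hpy : y0 ≤ p.2 := by
        simp only [hQdef, Finset.mem_filter] at hp
        exact hp.2.2
      have hpT : p ∈ T := by
        by_contra hpT
        exact absurd hpy (not_le.mpr (lt_of_le_of_lt (htop p (hQS hp) hpT q hq) hqy))
      refine Finset.mem_erase.mpr ⟨?_, hpT⟩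
      rintro rfl
      exact absurd hpy (not_le.mpr hqy)
    have := Finset.card_le_card hQT
    rw [Finset.card_erase_of_mem hq, hTcard'] at this
    omega
  -- surjectivity of c on T
  have himg : T.image c = Finset.univ := by
    apply Finset.eq_univ_of_card
    rw [Finset.card_image_of_injOn hinj, hTcard', Fintype.card_fin]
  have hcol : col ∈ T.image c := himg ▸ Finset.mem_univ col
  obtain ⟨q, hqT, hqc⟩ := Finset.mem_image.mp hcol
  have hqS : q ∈ S := hTS hqT
  simp only [hSdef, Finset.mem_filter] at hqS
  exact ⟨q, hqS.1, hqS.2, hTy q hqT, hqc⟩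
end

section
/- Any finite family of axis-parallel strips in the plane (sets of the form $[x_1,x_2] \times \mathbb{R}$ or $\mathbb{R} \times [y_1,y_2]$) can be $k$-colored so that every point of the plane contained in at least $2k-1$ of the strips is contained in strips of all $k$ colors. -/
open Classical in
lemma greedy_aux (n k : ℕ) (hk : 0 < k) (a b : Fin n → ℝ) (ha : Monotone a) :
    ∀ t : ℕ, t ≤ n → ∃ c : Fin n → Fin k, ∀ x : ℝ,
      min k {j : Fin n | (j : ℕ) < t ∧ a j ≤ x ∧ x ≤ b j}.ncard ≤
        (c '' {j : Fin n | (j : ℕ) < t ∧ a j ≤ x ∧ x ≤ b j}).ncard := by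
  intro t
  induction t with
  | zero =>
    intro _
    refine ⟨fun _ => ⟨0, hk⟩, fun x => ?_⟩
    have h0 : {j : Fin n | (j : ℕ) < 0 ∧ a j ≤ x ∧ x ≤ b j} = ∅ := by ext j; simp
    simp [h0]
  | succ t ih =>
    intro ht
    have htn : t < n := Nat.lt_of_succ_le ht
    obtain ⟨c, hc⟩ := ih htn.le
    set i : Fin n := ⟨t, htn⟩ with hi
    -- greedy choice of color
    have hne : (Finset.univ : Finset (Fin k)).Nonempty := ⟨⟨0, hk⟩, Finset.mem_univ _⟩
    set R : Fin k → WithBot ℝ := fun col =>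
      (Finset.univ.filter (fun j : Fin n => (j : ℕ) < t ∧ c j = col)).sup
        (fun j => (b j : WithBot ℝ)) with hR
    obtain ⟨col₀, -, hmin⟩ := Finset.exists_min_image Finset.univ R hne
    refine ⟨Function.update c i col₀, fun x => ?_⟩
    set S : Set (Fin n) := {j : Fin n | (j : ℕ) < t ∧ a j ≤ x ∧ x ≤ b j} with hS
    have hiS : i ∉ S := fun h => lt_irrefl t h.1
    have himg : Function.update c i col₀ '' S = c '' S := by
      apply Set.image_congr
      intro j hj
      exact Function.update_of_ne (by rintro rfl; exact hiS hj) _ _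
    by_cases hx : a i ≤ x ∧ x ≤ b i
    · -- new interval contains x
      have hS' : {j : Fin n | (j : ℕ) < t + 1 ∧ a j ≤ x ∧ x ≤ b j} = insert i S := by
        ext j
        simp only [Set.mem_setOf_eq, Set.mem_insert_iff, hS]
        constructor
        · rintro ⟨hj1, hj2⟩
          rcases Nat.lt_succ_iff_lt_or_eq.mp hj1 with h | h
          · exact Or.inr ⟨h, hj2⟩
          · exact Or.inl (Fin.ext h)
        · rintro (rfl | ⟨hj1, hj2⟩)
          · exact ⟨Nat.lt_succ_self _, hx⟩
          · exact ⟨Nat.lt_succ_of_lt hj1, hj2⟩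
      rw [hS']
      rw [Set.image_insert_eq, Function.update_self, himg]
      have hcard : (insert i S).ncard = S.ncard + 1 :=
        Set.ncard_insert_of_notMem hiS
      rw [hcard]
      by_cases hcol : k ≤ (c '' S).ncard
      · calc min k (S.ncard + 1) ≤ k := min_le_left _ _
          _ ≤ (c '' S).ncard := hcol
          _ ≤ (insert col₀ (c '' S)).ncard :=
            Set.ncard_le_ncard (Set.subset_insert _ _) (Set.toFinite _)
      · push_neg at hcol
        -- (c '' S).ncard = S.ncard
        have h1 : min k S.ncard ≤ (c '' S).ncard := hc x
        have h2 : (c '' S).ncard ≤ S.ncard := Set.ncard_image_le (Set.toFinite _)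
        have hSeq : (c '' S).ncard = S.ncard := by
          rcases min_cases k S.ncard with ⟨hm, hm2⟩ | ⟨hm, hm2⟩
          · omega
          · omega
        -- there's a color not in c '' S
        have hnuniv : c '' S ≠ Set.univ := by
          intro h
          have : (c '' S).ncard = k := by rw [h, Set.ncard_univ, Nat.card_eq_fintype_card,
            Fintype.card_fin]
          omega
        obtain ⟨col', hcol'⟩ : ∃ col', col' ∉ c '' S := by
          by_contra h
          push_neg at h
          exact hnuniv (Set.eq_univ_iff_forall.mpr h)
        -- R col' < x
        have hRcol' : R col' < (x : WithBot ℝ) := by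
          rw [hR]
          rw [Finset.sup_lt_iff (by exact WithBot.bot_lt_coe x)]
          intro j hj
          simp only [Finset.mem_filter, Finset.mem_univ, true_and] at hj
          by_contra hle
          push_neg at hle
          have hbx : x ≤ b j := by exact_mod_cast hle
          have hax : a j ≤ x := le_trans (ha (le_of_lt (show j < i from hj.1))) hx.1
          exact hcol' ⟨j, ⟨hj.1, hax, hbx⟩, hj.2⟩
        -- col₀ ∉ c '' S
        have hcol₀ : col₀ ∉ c '' S := by
          rintro ⟨j, hjS, hjc⟩
          have hle : (x : WithBot ℝ) ≤ R col₀ := by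
            rw [hR]
            refine le_trans ?_ (Finset.le_sup (f := fun j => (b j : WithBot ℝ))
              (Finset.mem_filter.mpr ⟨Finset.mem_univ j, hjS.1, hjc⟩))
            show (x : WithBot ℝ) ≤ (b j : WithBot ℝ)
            exact_mod_cast hjS.2.2
          exact absurd (lt_of_le_of_lt (le_trans hle (hmin col' (Finset.mem_univ _))) hRcol')
            (lt_irrefl _)
        rw [Set.ncard_insert_of_notMem hcol₀ (Set.toFinite _), hSeq]
        exact min_le_right _ _
    · -- new interval doesn't contain x : set unchanged
      have hS' : {j : Fin n | (j : ℕ) < t + 1 ∧ a j ≤ x ∧ x ≤ b j} = S := by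
        ext j
        simp only [Set.mem_setOf_eq, hS]
        constructor
        · rintro ⟨hj1, hj2⟩
          rcases Nat.lt_succ_iff_lt_or_eq.mp hj1 with h | h
          · exact ⟨h, hj2⟩
          · exact absurd hj2 (by rw [show j = i from Fin.ext h]; exact hx)
        · rintro ⟨hj1, hj2⟩
          exact ⟨Nat.lt_succ_of_lt hj1, hj2⟩
      rw [hS', himg]
      exact hc x

lemma interval_color (n k : ℕ) (hk : 0 < k) (a b : Fin n → ℝ) :
    ∃ c : Fin n → Fin k, ∀ x : ℝ,
      k ≤ {i : Fin n | a i ≤ x ∧ x ≤ b i}.ncard →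
      ∀ col : Fin k, ∃ i, c i = col ∧ a i ≤ x ∧ x ≤ b i := by
  set σ := Tuple.sort a with hσ
  have hmono : Monotone (a ∘ σ) := Tuple.monotone_sort a
  obtain ⟨c, hc⟩ := greedy_aux n k hk (a ∘ σ) (b ∘ σ) hmono n le_rfl
  refine ⟨c ∘ σ.symm, fun x hx col => ?_⟩
  set T : Set (Fin n) := {j : Fin n | (j : ℕ) < n ∧ (a ∘ ⇑σ) j ≤ x ∧ x ≤ (b ∘ ⇑σ) j} with hT
  have hTs : T = ⇑σ ⁻¹' {i : Fin n | a i ≤ x ∧ x ≤ b i} := by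
    ext j; simp [hT, j.isLt]
  have himg : ⇑σ.symm '' {i : Fin n | a i ≤ x ∧ x ≤ b i} = T := by
    rw [hTs]
    ext j
    constructor
    · rintro ⟨i, hi, rfl⟩
      simpa using hi
    · intro hj
      exact ⟨σ j, hj, by simp⟩
  have hTcard : T.ncard = {i : Fin n | a i ≤ x ∧ x ≤ b i}.ncard := by
    rw [← himg]
    exact Set.ncard_image_of_injective _ σ.symm.injective
  have h1 := hc x
  rw [← hT, hTcard] at h1
  have h3 : k ≤ (c '' T).ncard := le_trans (le_min le_rfl hx) h1
  replace h1 := h3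
  -- c '' T has ncard ≥ k hence is univ
  have hle : (c '' T).ncard ≤ k := by
    have := Set.ncard_le_ncard (Set.subset_univ (c '' T)) (Set.toFinite _)
    rwa [Set.ncard_univ, Nat.card_eq_fintype_card, Fintype.card_fin] at this
  have huniv : c '' T = Set.univ := by
    apply Set.eq_of_subset_of_ncard_le (Set.subset_univ _)
    rw [Set.ncard_univ, Nat.card_eq_fintype_card, Fintype.card_fin]; exact h1
  have hcol : col ∈ c '' T := huniv ▸ Set.mem_univ col
  obtain ⟨j, hjT, hjc⟩ := hcol
  refine ⟨σ j, ?_, hjT.2.1, hjT.2.2⟩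
  simp [hjc]

set_option linter.unusedVariables false in
/-- any finite family of axis-parallel strips (vertical or horizontal)
can be k-colored so that every point contained in at least 2k-1 strips is contained
in strips of all k colors. -/
theorem stmt12 (n k : ℕ) (hk : 0 < k) (vert : Fin n → Bool) (a b : Fin n → ℝ)
    (hab : ∀ i, a i ≤ b i) :
    ∃ c : Fin n → Fin k, ∀ p : ℝ × ℝ,
      2 * k - 1 ≤ {i : Fin n | if vert i then p.1 ∈ Set.Icc (a i) (b i)
                    else p.2 ∈ Set.Icc (a i) (b i)}.ncard →
      ∀ col : Fin k, ∃ i, c i = col ∧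
        (if vert i then p.1 ∈ Set.Icc (a i) (b i) else p.2 ∈ Set.Icc (a i) (b i)) := by
  classical
  obtain ⟨cv, hcv⟩ := interval_color n k hk (fun i => if vert i then a i else 1)
    (fun i => if vert i then b i else 0)
  obtain ⟨ch, hch⟩ := interval_color n k hk (fun i => if vert i then 1 else a i)
    (fun i => if vert i then 0 else b i)
  refine ⟨fun i => if vert i then cv i else ch i, fun p hp col => ?_⟩
  set T : Set (Fin n) := {i : Fin n | if vert i then p.1 ∈ Set.Icc (a i) (b i)
      else p.2 ∈ Set.Icc (a i) (b i)} with hT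
  set V : Set (Fin n) := {i : Fin n | (if vert i then a i else 1) ≤ p.1 ∧
      p.1 ≤ (if vert i then b i else 0)} with hV
  set H : Set (Fin n) := {i : Fin n | (if vert i then 1 else a i) ≤ p.2 ∧
      p.2 ≤ (if vert i then 0 else b i)} with hH
  have hVmem : ∀ i, i ∈ V ↔ (vert i = true ∧ p.1 ∈ Set.Icc (a i) (b i)) := by
    intro i
    by_cases h : vert i = true <;> simp [hV, h, Set.mem_Icc]
    intro h1; linarith
  have hHmem : ∀ i, i ∈ H ↔ (vert i = false ∧ p.2 ∈ Set.Icc (a i) (b i)) := by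
    intro i
    by_cases h : vert i = true <;> simp [hH, h, Set.mem_Icc]
    intro h1; linarith
  have hTVH : T ⊆ V ∪ H := by
    intro i hi
    simp only [hT, Set.mem_setOf_eq] at hi
    by_cases h : vert i = true
    · left; exact (hVmem i).mpr ⟨h, by simpa [h] using hi⟩
    · right
      exact (hHmem i).mpr ⟨Bool.eq_false_iff.mpr (by simpa using h), by simpa [h] using hi⟩
  have hcard : 2 * k - 1 ≤ V.ncard + H.ncard :=
    le_trans hp (le_trans (Set.ncard_le_ncard hTVH (Set.toFinite _)) (Set.ncard_union_le _ _))
  have hcases : k ≤ V.ncard ∨ k ≤ H.ncard := by omega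
  rcases hcases with h | h
  · obtain ⟨i, hic, hi1, hi2⟩ := hcv p.1 (by rw [hV] at h; exact h) col
    have hvi : vert i = true := ((hVmem i).mp ⟨hi1, hi2⟩).1
    have hIcc : p.1 ∈ Set.Icc (a i) (b i) := ((hVmem i).mp ⟨hi1, hi2⟩).2
    exact ⟨i, by simp [hvi, hic], by simp [hvi, hIcc]⟩
  · obtain ⟨i, hic, hi1, hi2⟩ := hch p.2 (by rw [hH] at h; exact h) col
    have hvi : vert i = false := ((hHmem i).mp ⟨hi1, hi2⟩).1
    have hIcc : p.2 ∈ Set.Icc (a i) (b i) := ((hHmem i).mp ⟨hi1, hi2⟩).2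
    exact ⟨i, by simp [hvi, hic], by simp [hvi, hIcc]⟩
end

section
/- Let $H$ be an ABA-free hypergraph on a linearly ordered finite vertex set and let $H^*$ be its dual hypergraph (vertices of $H^*$ are the edges of $H$, and for each vertex $v$ of $H$ the set of edges containing $v$ is an edge of $H^*$). Then $H^*$ is also ABA-free (with respect to a suitable linear order on the edges of $H$). -/
/-- `rr A B` : some element of `A \ B` precedes every element of `B \ A`.
This is the lexicographic (by least distinguishing element) strict order. -/
def rr {V : Type*} [LinearOrder V] (A B : Finset V) : Prop :=
  ∃ x ∈ A, x ∉ B ∧ ∀ y ∈ B, y ∉ A → x < y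

lemma rr_irrefl {V : Type*} [LinearOrder V] (A : Finset V) : ¬ rr A A := by
  rintro ⟨x, hx, hx', _⟩; exact hx' hx

lemma rr_asymm {V : Type*} [LinearOrder V] {A B : Finset V}
    (h : rr A B) (h' : rr B A) : False := by
  obtain ⟨x, hxA, hxB, hx⟩ := h
  obtain ⟨y, hyB, hyA, hy⟩ := h'
  exact absurd (hx y hyB hyA) (not_lt.2 (hy x hxA hxB).le)

lemma rr_total {V : Type*} [LinearOrder V] {A B : Finset V} (h : A ≠ B) :
    rr A B ∨ rr B A := by
  have hne : ((A \ B) ∪ (B \ A)).Nonempty := by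
    rw [Finset.nonempty_iff_ne_empty]
    intro hc
    rw [Finset.union_eq_empty] at hc
    exact h (Finset.Subset.antisymm
      (Finset.sdiff_eq_empty_iff_subset.1 hc.1)
      (Finset.sdiff_eq_empty_iff_subset.1 hc.2))
  set m := ((A \ B) ∪ (B \ A)).min' hne with hmdef
  have hm : m ∈ (A \ B) ∪ (B \ A) := Finset.min'_mem _ _
  rcases Finset.mem_union.1 hm with hmA | hmB
  · left
    rw [Finset.mem_sdiff] at hmA
    refine ⟨m, hmA.1, hmA.2, fun y hy hy' => ?_⟩
    have : m ≤ y := Finset.min'_le _ _ (Finset.mem_union_right _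
      (Finset.mem_sdiff.2 ⟨hy, hy'⟩))
    exact lt_of_le_of_ne this (fun he => hmA.2 (he ▸ hy))
  · right
    rw [Finset.mem_sdiff] at hmB
    refine ⟨m, hmB.1, hmB.2, fun y hy hy' => ?_⟩
    have : m ≤ y := Finset.min'_le _ _ (Finset.mem_union_left _
      (Finset.mem_sdiff.2 ⟨hy, hy'⟩))
    exact lt_of_le_of_ne this (fun he => hmB.2 (he ▸ hy))

lemma rr_trans {V : Type*} [LinearOrder V] {A B C : Finset V}
    (hab : rr A B) (hbc : rr B C) : rr A C := by
  obtain ⟨x, hxA, hxB, hx⟩ := hab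
  obtain ⟨y, hyB, hyC, hy⟩ := hbc
  have hAC : A ≠ C := by
    rintro rfl
    exact absurd (hx y hyB hyC) (not_lt.2 (hy x hxA hxB).le)
  have hne : ((A \ C) ∪ (C \ A)).Nonempty := by
    rw [Finset.nonempty_iff_ne_empty]
    intro hc
    rw [Finset.union_eq_empty] at hc
    exact hAC (Finset.Subset.antisymm
      (Finset.sdiff_eq_empty_iff_subset.1 hc.1)
      (Finset.sdiff_eq_empty_iff_subset.1 hc.2))
  set m := ((A \ C) ∪ (C \ A)).min' hne with hmdef
  have hm : m ∈ (A \ C) ∪ (C \ A) := Finset.min'_mem _ _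
  rcases Finset.mem_union.1 hm with hmA | hmC
  · rw [Finset.mem_sdiff] at hmA
    refine ⟨m, hmA.1, hmA.2, fun z hz hz' => ?_⟩
    have : m ≤ z := Finset.min'_le _ _ (Finset.mem_union_right _
      (Finset.mem_sdiff.2 ⟨hz, hz'⟩))
    exact lt_of_le_of_ne this (fun he => hmA.2 (he ▸ hz))
  · -- m ∈ C \ A : derive a contradiction
    exfalso
    rw [Finset.mem_sdiff] at hmC
    by_cases hmB : m ∈ B
    · -- m ∈ B \ A, so x < m
      have hxm : x < m := hx m hmB hmC.2
      by_cases hxC : x ∈ C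
      · -- x ∈ C \ B, so y < x ; where is y ?
        have hyx : y < x := hy x hxC hxB
        by_cases hyA : y ∈ A
        · have : m ≤ y := Finset.min'_le _ _ (Finset.mem_union_left _
            (Finset.mem_sdiff.2 ⟨hyA, hyC⟩))
          exact absurd (hyx.trans hxm) (not_lt.2 this)
        · exact absurd (hx y hyB hyA) (not_lt.2 hyx.le)
      · have : m ≤ x := Finset.min'_le _ _ (Finset.mem_union_left _
          (Finset.mem_sdiff.2 ⟨hxA, hxC⟩))
        exact absurd hxm (not_lt.2 this)
    · -- m ∈ C \ B, so y < m
      have hym : y < m := hy m hmC.1 hmB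
      by_cases hyA : y ∈ A
      · have : m ≤ y := Finset.min'_le _ _ (Finset.mem_union_left _
          (Finset.mem_sdiff.2 ⟨hyA, hyC⟩))
        exact absurd hym (not_lt.2 this)
      · have hxy : x < y := hx y hyB hyA
        by_cases hxC : x ∈ C
        · exact absurd (hy x hxC hxB) (not_lt.2 hxy.le)
        · have : m ≤ x := Finset.min'_le _ _ (Finset.mem_union_left _
            (Finset.mem_sdiff.2 ⟨hxA, hxC⟩))
          exact absurd (hxy.trans hym) (not_lt.2 this)

/-- the dual of an ABA-free hypergraph (on a linearly ordered finite
vertex set) is ABA-free with respect to a suitable order on the edges. -/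
theorem stmt14 {V : Type*} [LinearOrder V] (E : Finset (Finset V))
    (hABA : ¬ ∃ A ∈ E, ∃ B ∈ E, ∃ a1 b a2 : V, a1 < b ∧ b < a2 ∧
      a1 ∈ A ∧ a1 ∉ B ∧ a2 ∈ A ∧ a2 ∉ B ∧ b ∈ B ∧ b ∉ A) :
    ∃ f : Finset V → ℕ, Set.InjOn f ↑E ∧
      ¬ ∃ v w : V, ∃ e1 ∈ E, ∃ e2 ∈ E, ∃ e3 ∈ E,
        f e1 < f e2 ∧ f e2 < f e3 ∧
        v ∈ e1 ∧ w ∉ e1 ∧ v ∈ e3 ∧ w ∉ e3 ∧ w ∈ e2 ∧ v ∉ e2 := by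
  classical
  set f : Finset V → ℕ := fun A => (E.filter fun B => rr B A).card with hf
  have key : ∀ A ∈ E, ∀ B : Finset V, rr A B → f A < f B := by
    intro A hA B hAB
    apply Finset.card_lt_card
    have hsub : (E.filter fun C => rr C A) ⊆ (E.filter fun C => rr C B) := by
      intro C hC
      rw [Finset.mem_filter] at hC ⊢
      exact ⟨hC.1, rr_trans hC.2 hAB⟩
    rw [Finset.ssubset_iff_of_subset hsub]
    exact ⟨A, Finset.mem_filter.2 ⟨hA, hAB⟩,
      fun hc => rr_irrefl A (Finset.mem_filter.1 hc).2⟩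
  have hlt : ∀ A ∈ E, ∀ B ∈ E, f A < f B → rr A B := by
    intro A hA B hB hfAB
    rcases eq_or_ne A B with rfl | hne
    · exact absurd hfAB (lt_irrefl _)
    · rcases rr_total hne with h | h
      · exact h
      · exact absurd (key B hB A h) (not_lt.2 hfAB.le)
  refine ⟨f, ?_, ?_⟩
  · intro A hA B hB hfeq
    by_contra hne
    rcases rr_total hne with h | h
    · exact absurd hfeq (key A hA B h).ne
    · exact absurd hfeq.symm (key B hB A h).ne
  · rintro ⟨v, w, e1, he1, e2, he2, e3, he3, h12, h23,
      hv1, hw1, hv3, hw3, hw2, hv2⟩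
    have hr12 : rr e1 e2 := hlt e1 he1 e2 he2 h12
    have hr23 : rr e2 e3 := hlt e2 he2 e3 he3 h23
    have hvw : v ≠ w := fun he => hw1 (he ▸ hv1)
    rcases hvw.lt_or_gt with hlt' | hlt'
    · -- v < w : show rr e3 e2, contradicting rr e2 e3
      refine rr_asymm hr23 ⟨v, hv3, hv2, fun u hu hu' => ?_⟩
      by_contra hc
      have huv : u < v := lt_of_le_of_ne (not_lt.1 hc) (fun he => hu' (he ▸ hv3))
      exact hABA ⟨e2, he2, e3, he3, u, v, w, huv, hlt',
        hu, hu', hw2, hw3, hv3, hv2⟩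
    · -- w < v : show rr e2 e1, contradicting rr e1 e2
      refine rr_asymm hr12 ⟨w, hw2, hw1, fun u hu hu' => ?_⟩
      by_contra hc
      have huw : u < w := lt_of_le_of_ne (not_lt.1 hc) (fun he => hu' (he ▸ hw2))
      exact hABA ⟨e1, he1, e2, he2, u, w, v, huw, hlt',
        hu, hu', hv1, hv2, hw2, hw1⟩
end
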